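/- Let C be a real number satisfying (k₁ − k₂)/2 + sgn(C)(k₁ + k₂) ∫₀^{|C|} f(z) dz = 0, where sgn(c) = 1 for c ≥ 0 and sgn(c) = −1 for c < 0. Then Var[L(Z + C)] = (k₁² + k₂²) ∫₀^∞ z² f(z) dz − 2(k₁ + k₂)² (∫₀^{|C|} f(z) dz)(∫₀^{|C|} z² f(z) dz) − 4|C| (k₁ + k₂)² (∫₀^{|C|} f(z) dz)(∫_{|C|}^∞ z f(z) dz) + C²(k₁ + k₂)²/4 − (k₁ + k₂)² (∫_{|C|}^∞ z f(z) dz)² − C²(k₁ + k₂)² (∫₀^{|C|} f(z) dz)². -/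

import Mathlib

/-!
On each side of `z = -C` the loss `L (z + C)` is linear, so `E[L(Z + C)]` and `E[L(Z + C)²]`
are combinations of the moments of `f` over `(-∞, -C]` and `(-C, ∞)`. Evenness of `f` turns
these into `∫₀^C f`, `∫₀^C z² f`, `∫_C^∞ z f` and `∫₀^∞ z² f`, with signed interval integrals,
so that no case distinction on the sign of `C` is needed until the very end, where evenness
again replaces `C` by `|C|`. The first-order condition on `C` says
`(k₁ - k₂)/2 + (k₁ + k₂) ∫₀^C f = 0`; eliminating `k₁ - k₂` with it gives the formula.
-/

open MeasureTheory ProbabilityTheory Set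

section Parity

variable {g : ℝ → ℝ}

theorem integral_Ioi_zero_of_even (hg : g.Even) :
    ∫ x in Ioi 0, g x = (∫ x, g x) / 2 := by
  have habs : (fun x => g |x|) = g := funext fun x => by
    rcases abs_choice x with h | h <;> rw [h]
    exact hg x
  rw [← habs, integral_comp_abs, habs]
  ring

theorem intervalIntegral.integral_neg_zero_of_even (hg : g.Even) (c : ℝ) :
    ∫ x in -c..0, g x = ∫ x in 0..c, g x := by
  simpa only [hg.eq, neg_zero] using (intervalIntegral.integral_comp_neg (a := 0) (b := c) g).symm

theorem intervalIntegral.integral_zero_neg_of_even (hg : g.Even) (c : ℝ) :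
    ∫ x in 0..-c, g x = -∫ x in 0..c, g x := by
  rw [intervalIntegral.integral_symm, intervalIntegral.integral_neg_zero_of_even hg]

theorem integral_Iic_neg_of_even (hg : g.Even) (hint : Integrable g) (c : ℝ) :
    ∫ x in Iic (-c), g x = (∫ x in Ioi 0, g x) - ∫ x in 0..c, g x := by
  rw [← integral_comp_neg_Ioi, ← intervalIntegral.integral_Ioi_sub_Ioi' hint.integrableOn
    hint.integrableOn]
  simp only [hg.eq, sub_sub_cancel]

theorem integral_Ioi_neg_of_even (hg : g.Even) (hint : Integrable g) (c : ℝ) :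
    ∫ x in Ioi (-c), g x = (∫ x in Ioi 0, g x) + ∫ x in 0..c, g x := by
  rw [← intervalIntegral.integral_interval_add_Ioi hint.integrableOn hint.integrableOn (a := -c)
    (b := 0), intervalIntegral.integral_neg_zero_of_even hg, add_comm]

theorem integral_Iic_neg_of_odd (hg : g.Odd) (c : ℝ) :
    ∫ x in Iic (-c), g x = -∫ x in Ioi c, g x := by
  rw [← integral_comp_neg_Ioi]
  simp only [hg.eq, integral_neg]

theorem integral_Ioi_neg_of_odd (hg : g.Odd) (hint : Integrable g) (c : ℝ) :
    ∫ x in Ioi (-c), g x = ∫ x in Ioi c, g x := by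
  have hzero : ∫ x, g x = 0 := by
    have h := integral_neg_eq_self g volume
    simp only [hg.eq, integral_neg] at h
    linarith
  have hsplit := intervalIntegral.integral_Iic_add_Ioi (b := -c) hint.integrableOn hint.integrableOn
  rw [integral_Iic_neg_of_odd hg, hzero] at hsplit
  linarith

theorem Function.Even.odd_id_mul (hg : g.Even) : Function.Odd fun x => x * g x :=
  fun x => by dsimp only; rw [hg.eq]; ring

theorem Function.Even.sq_mul (hg : g.Even) : Function.Even fun x => x ^ 2 * g x :=
  fun x => by dsimp only; rw [hg.eq]; ring

end Parity

theorem integrable_id_mul_of_sq_mul {g : ℝ → ℝ} (h0 : Integrable g)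
    (h2 : Integrable fun x => x ^ 2 * g x) : Integrable fun x => x * g x := by
  refine (h0.norm.add h2.norm).mono' (aestronglyMeasurable_id.mul h0.1) (ae_of_all _ fun x => ?_)
  have hx : |x| ≤ 1 + x ^ 2 := by nlinarith [abs_nonneg x, sq_abs x]
  simp only [Pi.add_apply, norm_mul, norm_pow, Real.norm_eq_abs, sq_abs]
  nlinarith [abs_nonneg (g x)]

theorem integrable_add_const_mul {g : ℝ → ℝ} (c : ℝ) (h0 : Integrable g)
    (h1 : Integrable fun x => x * g x) : Integrable fun x => (x + c) * g x :=
  (h1.add (h0.const_mul c)).congr (ae_of_all _ fun x => by simp only [Pi.add_apply]; ring)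

theorem integrable_add_const_sq_mul {g : ℝ → ℝ} (c : ℝ) (h0 : Integrable g)
    (h1 : Integrable fun x => x * g x) (h2 : Integrable fun x => x ^ 2 * g x) :
    Integrable fun x => (x + c) ^ 2 * g x :=
  ((h2.add (h1.const_mul (2 * c))).add (h0.const_mul (c ^ 2))).congr
    (ae_of_all _ fun x => by simp only [Pi.add_apply]; ring)

theorem setIntegral_add_const_mul {g : ℝ → ℝ} {s : Set ℝ} (c : ℝ) (h0 : IntegrableOn g s)
    (h1 : IntegrableOn (fun x => x * g x) s) :
    ∫ x in s, (x + c) * g x = (∫ x in s, x * g x) + c * ∫ x in s, g x := by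
  simp only [add_mul]
  rw [integral_add h1 (h0.const_mul c), integral_const_mul]

theorem setIntegral_add_const_sq_mul {g : ℝ → ℝ} {s : Set ℝ} (c : ℝ) (h0 : IntegrableOn g s)
    (h1 : IntegrableOn (fun x => x * g x) s) (h2 : IntegrableOn (fun x => x ^ 2 * g x) s) :
    ∫ x in s, (x + c) ^ 2 * g x
      = (∫ x in s, x ^ 2 * g x) + 2 * c * (∫ x in s, x * g x) + c ^ 2 * ∫ x in s, g x := by
  have hexp : (fun x => (x + c) ^ 2 * g x)
      = fun x => x ^ 2 * g x + 2 * c * (x * g x) + c ^ 2 * g x := by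
    funext x; ring
  rw [hexp, integral_add, integral_add, integral_const_mul, integral_const_mul]
  exacts [h2, h1.const_mul _, h2.add (h1.const_mul _), h0.const_mul _]

noncomputable def linLinLoss (a b w : ℝ) : ℝ := if 0 ≤ w then a * w else -b * w

section LinLinLoss

variable {a b : ℝ}

theorem linLinLoss_of_nonneg {w : ℝ} (hw : 0 ≤ w) : linLinLoss a b w = a * w := if_pos hw

theorem linLinLoss_of_nonpos {w : ℝ} (hw : w ≤ 0) : linLinLoss a b w = -b * w := by
  rcases hw.lt_or_eq with hw | rfl
  · exact if_neg hw.not_ge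
  · simp [linLinLoss]

theorem measurable_linLinLoss : Measurable (linLinLoss a b) :=
  Measurable.ite measurableSet_Ici (measurable_const.mul measurable_id)
    (measurable_const.mul measurable_id)

variable (a b) {g : ℝ → ℝ} {c : ℝ} (n : ℕ)

theorem linLinLoss_pow_mul_eqOn_Ioi :
    EqOn (fun z => linLinLoss a b (z + c) ^ n * g z) (fun z => a ^ n * ((z + c) ^ n * g z))
      (Ioi (-c)) := fun z hz => by
  dsimp only
  rw [linLinLoss_of_nonneg (neg_le_iff_add_nonneg.1 (le_of_lt hz)), mul_pow]
  ring

theorem linLinLoss_pow_mul_eqOn_Iic :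
    EqOn (fun z => linLinLoss a b (z + c) ^ n * g z) (fun z => (-b) ^ n * ((z + c) ^ n * g z))
      (Iic (-c)) := fun z hz => by
  dsimp only
  rw [linLinLoss_of_nonpos (le_neg_iff_add_nonpos_right.1 hz), mul_pow]
  ring

variable {n} (hint : Integrable fun z => (z + c) ^ n * g z)
include hint

theorem integrableOn_Ioi_linLinLoss_pow_mul :
    IntegrableOn (fun z => linLinLoss a b (z + c) ^ n * g z) (Ioi (-c)) :=
  (hint.const_mul _).integrableOn.congr_fun (linLinLoss_pow_mul_eqOn_Ioi a b n).symm
    measurableSet_Ioi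

theorem integrableOn_Iic_linLinLoss_pow_mul :
    IntegrableOn (fun z => linLinLoss a b (z + c) ^ n * g z) (Iic (-c)) :=
  (hint.const_mul _).integrableOn.congr_fun (linLinLoss_pow_mul_eqOn_Iic a b n).symm
    measurableSet_Iic

theorem integrable_linLinLoss_pow_mul : Integrable fun z => linLinLoss a b (z + c) ^ n * g z := by
  rw [← integrableOn_univ, ← Iic_union_Ioi (a := -c)]
  exact (integrableOn_Iic_linLinLoss_pow_mul a b hint).union
    (integrableOn_Ioi_linLinLoss_pow_mul a b hint)

theorem integral_linLinLoss_pow_mul :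
    ∫ z, linLinLoss a b (z + c) ^ n * g z
      = a ^ n * (∫ z in Ioi (-c), (z + c) ^ n * g z)
        + (-b) ^ n * ∫ z in Iic (-c), (z + c) ^ n * g z := by
  rw [← intervalIntegral.integral_Iic_add_Ioi (integrableOn_Iic_linLinLoss_pow_mul a b hint)
      (integrableOn_Ioi_linLinLoss_pow_mul a b hint),
    setIntegral_congr_fun measurableSet_Iic (linLinLoss_pow_mul_eqOn_Iic a b n),
    setIntegral_congr_fun measurableSet_Ioi (linLinLoss_pow_mul_eqOn_Ioi a b n),
    integral_const_mul, integral_const_mul, add_comm]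

end LinLinLoss

section EvenDensity

variable {f : ℝ → ℝ} (hf_symm : f.Even) (hf_int : Integrable f)
  (hmom : Integrable fun x => x ^ 2 * f x) (a b c : ℝ)
include hf_symm hf_int hmom

theorem integral_linLinLoss_mul_of_even :
    ∫ z, linLinLoss a b (z + c) * f z
      = a * ((∫ z in Ioi c, z * f z) + c * ((∫ z in Ioi 0, f z) + ∫ z in 0..c, f z))
        - b * (-(∫ z in Ioi c, z * f z) + c * ((∫ z in Ioi 0, f z) - ∫ z in 0..c, f z)) := by
  have h1 : Integrable fun x => x * f x := integrable_id_mul_of_sq_mul hf_int hmom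
  have hodd := hf_symm.odd_id_mul
  have hint : Integrable fun x => (x + c) ^ 1 * f x := by
    simpa only [pow_one] using integrable_add_const_mul c hf_int h1
  have h := integral_linLinLoss_pow_mul a b hint
  simp only [pow_one] at h
  rw [h, setIntegral_add_const_mul c hf_int.integrableOn h1.integrableOn,
    setIntegral_add_const_mul c hf_int.integrableOn h1.integrableOn,
    integral_Ioi_neg_of_odd hodd h1,
    integral_Iic_neg_of_odd hodd, integral_Ioi_neg_of_even hf_symm hf_int,
    integral_Iic_neg_of_even hf_symm hf_int]
  ring

theorem integral_linLinLoss_sq_mul_of_even :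
    ∫ z, linLinLoss a b (z + c) ^ 2 * f z
      = a ^ 2 * ((∫ z in Ioi 0, z ^ 2 * f z) + (∫ z in 0..c, z ^ 2 * f z)
          + 2 * c * (∫ z in Ioi c, z * f z) + c ^ 2 * ((∫ z in Ioi 0, f z) + ∫ z in 0..c, f z))
        + b ^ 2 * ((∫ z in Ioi 0, z ^ 2 * f z) - (∫ z in 0..c, z ^ 2 * f z)
          - 2 * c * (∫ z in Ioi c, z * f z)
          + c ^ 2 * ((∫ z in Ioi 0, f z) - ∫ z in 0..c, f z)) := by
  have h1 : Integrable fun x => x * f x := integrable_id_mul_of_sq_mul hf_int hmom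
  have hodd := hf_symm.odd_id_mul
  rw [integral_linLinLoss_pow_mul a b (integrable_add_const_sq_mul c hf_int h1 hmom),
    setIntegral_add_const_sq_mul c hf_int.integrableOn h1.integrableOn hmom.integrableOn,
    setIntegral_add_const_sq_mul c hf_int.integrableOn h1.integrableOn hmom.integrableOn,
    integral_Ioi_neg_of_odd hodd h1, integral_Iic_neg_of_odd hodd,
    integral_Ioi_neg_of_even hf_symm hf_int, integral_Iic_neg_of_even hf_symm hf_int,
    integral_Ioi_neg_of_even hf_symm.sq_mul hmom, integral_Iic_neg_of_even hf_symm.sq_mul hmom]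
  ring

end EvenDensity

theorem variance_comp_of_map_eq_withDensity {Ω : Type*} [MeasurableSpace Ω] {μ : Measure Ω}
    [IsProbabilityMeasure μ] {Z : Ω → ℝ} {f g : ℝ → ℝ} (hZ : AEMeasurable Z μ)
    (hf : AEMeasurable f) (hf_nonneg : ∀ᵐ x, 0 ≤ f x)
    (hdens : μ.map Z = volume.withDensity fun x => ENNReal.ofReal (f x))
    (hg : Measurable g) (hg2 : Integrable fun x => g x ^ 2 * f x) :
    variance (fun ω => g (Z ω)) μ = (∫ x, g x ^ 2 * f x) - (∫ x, g x * f x) ^ 2 := by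
  have hfin : ∀ᵐ x, ENNReal.ofReal (f x) < ⊤ := ae_of_all _ fun _ => ENNReal.ofReal_lt_top
  have hdensity : ∀ h : ℝ → ℝ, (fun x => (ENNReal.ofReal (f x)).toReal • h x) =ᵐ[volume]
      fun x => h x * f x := fun h => by
    filter_upwards [hf_nonneg] with x hx
    rw [ENNReal.toReal_ofReal hx, smul_eq_mul, mul_comm]
  have hmeasure : IsProbabilityMeasure (volume.withDensity fun x => ENNReal.ofReal (f x)) :=
    hdens ▸ Measure.isProbabilityMeasure_map hZ
  have hmem : MemLp g 2 (volume.withDensity fun x => ENNReal.ofReal (f x)) := by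
    rw [memLp_two_iff_integrable_sq hg.aestronglyMeasurable,
      integrable_withDensity_iff_integrable_smul₀' hf.ennreal_ofReal hfin]
    exact hg2.congr (hdensity _).symm
  rw [show (fun ω => g (Z ω)) = g ∘ Z from rfl, ← variance_map hg.aemeasurable hZ, hdens,
    variance_eq_sub hmem, integral_withDensity_eq_integral_toReal_smul₀ hf.ennreal_ofReal hfin,
    integral_withDensity_eq_integral_toReal_smul₀ hf.ennreal_ofReal hfin,
    integral_congr_ae (hdensity _), integral_congr_ae (hdensity _)]
  simp only [Pi.pow_apply]

theorem variance_loss_at_minimizer_general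
    {Ω : Type*} [MeasurableSpace Ω] (μ : Measure Ω) [IsProbabilityMeasure μ]
    (f : ℝ → ℝ) (hf_nonneg : ∀ x, 0 ≤ f x)
    (hf_total : ∫ z, f z = 1)
    (hf_symm : ∀ x, f (-x) = f x)
    (Z : Ω → ℝ) (hZ : Measurable Z)
    (hdens : Measure.map Z μ = volume.withDensity (fun z => ENNReal.ofReal (f z)))
    (hmom : Integrable (fun z => z ^ 2 * f z))
    (k₁ k₂ : ℝ)
    (L : ℝ → ℝ) (hL : ∀ z, L z = if 0 ≤ z then k₁ * z else -k₂ * z)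
    (C : ℝ)
    (hC : (k₁ - k₂) / 2
        + (if 0 ≤ C then (1:ℝ) else -1) * (k₁ + k₂) * (∫ z in (0:ℝ)..|C|, f z) = 0) :
    variance (fun ω => L (Z ω + C)) μ
      = (k₁ ^ 2 + k₂ ^ 2) * (∫ z in Set.Ioi (0:ℝ), z ^ 2 * f z)
        - 2 * (k₁ + k₂) ^ 2 * (∫ z in (0:ℝ)..|C|, f z) * (∫ z in (0:ℝ)..|C|, z ^ 2 * f z)
        - 4 * |C| * (k₁ + k₂) ^ 2 * (∫ z in (0:ℝ)..|C|, f z) * (∫ z in Set.Ioi |C|, z * f z)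
        + C ^ 2 * (k₁ + k₂) ^ 2 / 4
        - (k₁ + k₂) ^ 2 * (∫ z in Set.Ioi |C|, z * f z) ^ 2
        - C ^ 2 * (k₁ + k₂) ^ 2 * (∫ z in (0:ℝ)..|C|, f z) ^ 2 := by
  obtain rfl : L = linLinLoss k₁ k₂ := funext hL
  have hf_even : f.Even := hf_symm
  have hf_int : Integrable f := .of_integral_ne_zero (by rw [hf_total]; exact one_ne_zero)
  have h1 : Integrable fun z => z * f z := integrable_id_mul_of_sq_mul hf_int hmom
  have hsq : Integrable fun z => linLinLoss k₁ k₂ (z + C) ^ 2 * f z :=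
    integrable_linLinLoss_pow_mul k₁ k₂ (integrable_add_const_sq_mul C hf_int h1 hmom)
  rw [variance_comp_of_map_eq_withDensity (g := fun z => linLinLoss k₁ k₂ (z + C))
      hZ.aemeasurable hf_int.aemeasurable (ae_of_all _ hf_nonneg) hdens
      (measurable_linLinLoss.comp (measurable_add_const C)) hsq,
    integral_linLinLoss_sq_mul_of_even hf_even hf_int hmom,
    integral_linLinLoss_mul_of_even hf_even hf_int hmom, integral_Ioi_zero_of_even hf_even,
    hf_total]
  set Q := ∫ z in (0:ℝ)..C, z ^ 2 * f z
  set M := ∫ z in Ioi C, z * f z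
  rcases le_or_gt 0 C with hC0 | hC0
  · rw [if_pos hC0, abs_of_nonneg hC0] at hC
    rw [abs_of_nonneg hC0]
    linear_combination (2 * (k₁ + k₂) * (Q + C * M)) * hC
  · rw [if_neg hC0.not_ge, abs_of_neg hC0, intervalIntegral.integral_zero_neg_of_even hf_even] at hC
    rw [abs_of_neg hC0, intervalIntegral.integral_zero_neg_of_even hf_even,
      intervalIntegral.integral_zero_neg_of_even hf_even.sq_mul,
      integral_Ioi_neg_of_odd hf_even.odd_id_mul h1]
    linear_combination (2 * (k₁ + k₂) * (Q + C * M)) * hC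

/-- If `C` satisfies `(k₁ − k₂)/2 + sgn(C)(k₁ + k₂) ∫₀^{|C|} f = 0`, then
`Var[L(Z + C)]` equals the stated expression. -/
theorem variance_loss_at_minimizer
    {Ω : Type*} [MeasurableSpace Ω] (μ : Measure Ω) [IsProbabilityMeasure μ]
    (f : ℝ → ℝ) (hf_meas : Measurable f) (hf_nonneg : ∀ x, 0 ≤ f x)
    (hf_total : ∫ z, f z = 1)
    (hf_symm : ∀ x, f (-x) = f x)
    (hf_mono : ∀ x y : ℝ, 0 ≤ x → x ≤ y → f y ≤ f x)
    (Z : Ω → ℝ) (hZ : Measurable Z)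
    (hdens : Measure.map Z μ = volume.withDensity (fun z => ENNReal.ofReal (f z)))
    (hmom : Integrable (fun z => z ^ 2 * f z))
    (k₁ k₂ : ℝ) (hk₁ : 0 < k₁) (hk₂ : 0 < k₂)
    (L : ℝ → ℝ) (hL : ∀ z, L z = if 0 ≤ z then k₁ * z else -k₂ * z)
    (C : ℝ)
    (hC : (k₁ - k₂) / 2
        + (if 0 ≤ C then (1:ℝ) else -1) * (k₁ + k₂) * (∫ z in (0:ℝ)..|C|, f z) = 0) :
    variance (fun ω => L (Z ω + C)) μ
      = (k₁ ^ 2 + k₂ ^ 2) * (∫ z in Set.Ioi (0:ℝ), z ^ 2 * f z)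
        - 2 * (k₁ + k₂) ^ 2 * (∫ z in (0:ℝ)..|C|, f z) * (∫ z in (0:ℝ)..|C|, z ^ 2 * f z)
        - 4 * |C| * (k₁ + k₂) ^ 2 * (∫ z in (0:ℝ)..|C|, f z) * (∫ z in Set.Ioi |C|, z * f z)
        + C ^ 2 * (k₁ + k₂) ^ 2 / 4
        - (k₁ + k₂) ^ 2 * (∫ z in Set.Ioi |C|, z * f z) ^ 2
        - C ^ 2 * (k₁ + k₂) ^ 2 * (∫ z in (0:ℝ)..|C|, f z) ^ 2 :=
  variance_loss_at_minimizer_general μ f hf_nonneg hf_total hf_symm Z hZ hdens hmom k₁ k₂ L hL C hC
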